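/- POD subspace optimality: let u₁, …, u_m be vectors in a finite-dimensional real inner product space H of dimension n, let C = Σ_{i=1}^m u_i ⊗ u_i be the (symmetric positive semidefinite) correlation operator with eigenvalues λ₁ ≥ λ₂ ≥ … ≥ λ_n ≥ 0 and a corresponding orthonormal basis of eigenvectors φ₁, …, φ_n, and let N ≤ n. Then for V_N = span(φ₁, …, φ_N) one has Σ_{i=1}^m ‖u_i − Π_{V_N} u_i‖² = Σ_{k=N+1}^n λ_k, and for every linear subspace W ⊆ H of dimension at most N one has Σ_{i=1}^m ‖u_i − Π_W u_i‖² ≥ Σ_{k=N+1}^n λ_k, where Π_V denotes the orthogonal projection onto the subspace V. -/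

import Mathlib

/-!
Write `P_K` for the orthogonal projection onto a subspace `K` and expand in the orthonormal
eigenbasis `b = φ` of the correlation operator `C`. Computing the trace of `P_{Kᗮ} C` in that
eigenbasis gives
`∑ i, ‖u i - P_K u i‖² = ∑ k, lam k * ‖P_{Kᗮ} b k‖²`,
with weights `‖P_{Kᗮ} b k‖² ∈ [0, 1]` summing to `tr P_{Kᗮ} = dim Kᗮ ≥ n - N`.
For `K = V_N` the weights are the indicator of `N ≤ k`. For any other `K` a bathtub argument
shows that, since `lam` is decreasing and nonnegative, such weights cannot give less than the
sum of the last `n - N` eigenvalues.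
-/

open Finset
open scoped InnerProductSpace

theorem sum_le_sum_mul_of_le_threshold {ι : Type*} [Fintype ι] (B : Finset ι) {lam s : ι → ℝ}
    {c : ℝ} (hc : 0 ≤ c) (hB : ∀ k ∈ B, lam k ≤ c) (hBc : ∀ k ∉ B, c ≤ lam k)
    (hs0 : ∀ k, 0 ≤ s k) (hs1 : ∀ k, s k ≤ 1) (hsB : (#B : ℝ) ≤ ∑ k, s k) :
    ∑ k ∈ B, lam k ≤ ∑ k, lam k * s k := by
  classical
  calc ∑ k ∈ B, lam k
      ≤ ∑ k ∈ B, lam k + c * (∑ k, s k - #B) := le_add_of_nonneg_right (by nlinarith)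
    _ = ∑ k ∈ B, (lam k + c * (s k - 1)) + ∑ k ∈ Bᶜ, c * s k := by
        rw [← sum_add_sum_compl B s]
        simp only [sum_add_distrib, ← mul_sum, sum_sub_distrib, sum_const, nsmul_one]
        ring
    _ ≤ ∑ k ∈ B, lam k * s k + ∑ k ∈ Bᶜ, lam k * s k := by
        refine add_le_add (sum_le_sum fun k hk => ?_) (sum_le_sum fun k hk => ?_)
        · nlinarith [hB k hk, hs1 k]
        · exact mul_le_mul_of_nonneg_right (hBc k (mem_compl.mp hk)) (hs0 k)
    _ = ∑ k, lam k * s k := sum_add_sum_compl B _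

theorem Fin.card_filter_le_val (n N : ℕ) : #{k : Fin n | N ≤ (k : ℕ)} = n - N := by
  have h := card_filter_add_card_filter_not (s := (univ : Finset (Fin n)))
    (fun k : Fin n => (k : ℕ) < N)
  simp only [not_lt, Fin.card_filter_val_lt, card_univ, Fintype.card_fin] at h
  omega

theorem sum_filter_le_le_sum_mul_of_antitone {n N : ℕ} {lam s : Fin n → ℝ} (hdec : Antitone lam)
    (hpos : ∀ k, 0 ≤ lam k) (hs0 : ∀ k, 0 ≤ s k) (hs1 : ∀ k, s k ≤ 1)
    (hs : ((n - N : ℕ) : ℝ) ≤ ∑ k, s k) :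
    ∑ k ∈ univ.filter (fun k : Fin n => N ≤ (k : ℕ)), lam k ≤ ∑ k, lam k * s k := by
  have hcard : (#{k : Fin n | N ≤ (k : ℕ)} : ℝ) ≤ ∑ k, s k := by
    rwa [Fin.card_filter_le_val]
  by_cases hN : N < n
  · refine sum_le_sum_mul_of_le_threshold _ (hpos ⟨N, hN⟩) (fun k hk => ?_) (fun k hk => ?_)
      hs0 hs1 hcard
    · exact hdec (Fin.le_def.mpr (mem_filter.mp hk).2)
    · exact hdec (Fin.le_def.mpr (by simpa using hk : (k : ℕ) < N).le)
  · refine sum_le_sum_mul_of_le_threshold _ le_rfl (fun k hk => ?_) (fun k _ => hpos k)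
      hs0 hs1 hcard
    exact absurd (lt_of_le_of_lt (mem_filter.mp hk).2 k.isLt) hN

section

variable {H ι κ : Type*} [NormedAddCommGroup H] [InnerProductSpace ℝ H]

theorem real_inner_starProjection_self (K : Submodule ℝ H) [K.HasOrthogonalProjection] (x : H) :
    ⟪x, K.starProjection x⟫_ℝ = ‖K.starProjection x‖ ^ 2 := by
  rw [← real_inner_self_eq_norm_sq, K.inner_starProjection_left_eq_right,
    K.starProjection_eq_self_iff.mpr (K.starProjection_apply_mem x)]

theorem starProjection_span_image_apply {φ : ι → H} (hφ : Orthonormal ℝ φ) (s : Set ι)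
    [(Submodule.span ℝ (φ '' s)).HasOrthogonalProjection] (k : ι) [Decidable (k ∈ s)] :
    (Submodule.span ℝ (φ '' s)).starProjection (φ k) = if k ∈ s then φ k else 0 := by
  split_ifs with hk
  · exact Submodule.starProjection_eq_self_iff.mpr (Submodule.subset_span ⟨k, hk, rfl⟩)
  · have hortho : Submodule.span ℝ {φ k} ⟂ Submodule.span ℝ (φ '' s) :=
      Submodule.isOrtho_span.mpr <| by
        rintro _ rfl _ ⟨j, hj, rfl⟩
        exact hφ.2 (ne_of_mem_of_not_mem hj hk).symm
    exact (Submodule.starProjection_apply_eq_zero_iff _).mpr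
      (hortho (Submodule.subset_span rfl))

variable [Fintype ι] [Fintype κ]

theorem sum_norm_sq_starProjection_eq_finrank [FiniteDimensional ℝ H] (K : Submodule ℝ H)
    (b : OrthonormalBasis ι ℝ H) :
    ∑ k, ‖K.starProjection (b k)‖ ^ 2 = Module.finrank ℝ K := by
  have hproj : LinearMap.IsProj K (K.starProjection : H →ₗ[ℝ] H) :=
    ⟨K.starProjection_apply_mem, fun _ hx => K.starProjection_eq_self_iff.mpr hx⟩
  calc ∑ k, ‖K.starProjection (b k)‖ ^ 2 = ∑ k, ⟪b k, K.starProjection (b k)⟫_ℝ := by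
        simp only [real_inner_starProjection_self]
    _ = LinearMap.trace ℝ H K.starProjection := (LinearMap.trace_eq_sum_inner _ b).symm
    _ = Module.finrank ℝ K := hproj.trace

variable (b : OrthonormalBasis ι ℝ H) (u : κ → H) {lam : ι → ℝ}
  (heig : ∀ k, ∑ i, ⟪u i, b k⟫_ℝ • u i = lam k • b k)
include heig

theorem sum_inner_map_self_eq_sum_eigenvalue_mul {T : H →ₗ[ℝ] H} (hT : T.IsSymmetric) :
    ∑ i, ⟪u i, T (u i)⟫_ℝ = ∑ k, lam k * ⟪b k, T (b k)⟫_ℝ :=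
  calc ∑ i, ⟪u i, T (u i)⟫_ℝ = ∑ i, ∑ k, ⟪u i, b k⟫_ℝ * ⟪u i, T (b k)⟫_ℝ := by
        refine sum_congr rfl fun i _ => ?_
        rw [← b.sum_inner_mul_inner]
        exact sum_congr rfl fun k _ => by rw [← hT, real_inner_comm (u i)]
    _ = ∑ k, ⟪∑ i, ⟪u i, b k⟫_ℝ • u i, T (b k)⟫_ℝ := by
        rw [sum_comm]
        simp only [sum_inner, real_inner_smul_left]
    _ = ∑ k, lam k * ⟪b k, T (b k)⟫_ℝ := by
        simp only [heig, real_inner_smul_left]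

theorem sum_norm_sq_starProjection_eq_sum_eigenvalue_mul (K : Submodule ℝ H)
    [K.HasOrthogonalProjection] :
    ∑ i, ‖K.starProjection (u i)‖ ^ 2 = ∑ k, lam k * ‖K.starProjection (b k)‖ ^ 2 := by
  simpa only [ContinuousLinearMap.coe_coe, real_inner_starProjection_self] using
    sum_inner_map_self_eq_sum_eigenvalue_mul b u heig K.starProjection_isSymmetric

theorem sum_norm_sq_sub_starProjection_eq_sum_eigenvalue_mul (K : Submodule ℝ H)
    [K.HasOrthogonalProjection] :
    ∑ i, ‖u i - K.starProjection (u i)‖ ^ 2 =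
      ∑ k, lam k * ‖b k - K.starProjection (b k)‖ ^ 2 := by
  simpa only [Submodule.starProjection_orthogonal_val] using
    sum_norm_sq_starProjection_eq_sum_eigenvalue_mul b u heig Kᗮ

end

theorem pod_subspace_optimality_general {H : Type*} [NormedAddCommGroup H]
    [InnerProductSpace ℝ H] [FiniteDimensional ℝ H]
    (n : ℕ) (hn : Module.finrank ℝ H = n) (m : ℕ) (u : Fin m → H)
    (φ : Fin n → H) (lam : Fin n → ℝ)
    (hφ : Orthonormal ℝ φ) (hdec : Antitone lam) (hpos : ∀ k, 0 ≤ lam k)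
    (heig : ∀ k, ∑ i, (inner ℝ (u i) (φ k) : ℝ) • u i = lam k • φ k)
    (N : ℕ) :
    (∑ i, ‖u i - (Submodule.orthogonalProjection
        (Submodule.span ℝ (φ '' {k | (k : ℕ) < N})) (u i) : H)‖ ^ 2 =
      ∑ k ∈ Finset.univ.filter (fun k : Fin n => N ≤ (k : ℕ)), lam k) ∧
    (∀ W : Submodule ℝ H, Module.finrank ℝ W ≤ N →
      ∑ k ∈ Finset.univ.filter (fun k : Fin n => N ≤ (k : ℕ)), lam k ≤
        ∑ i, ‖u i - (Submodule.orthogonalProjection W (u i) : H)‖ ^ 2) := by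
  let b : OrthonormalBasis (Fin n) ℝ H := OrthonormalBasis.mk hφ
    (hφ.linearIndependent.span_eq_top_of_card_eq_finrank' (by simp [hn])).ge
  have hb : ⇑b = φ := OrthonormalBasis.coe_mk _ _
  rw [← hb] at heig
  constructor
  · refine (sum_norm_sq_sub_starProjection_eq_sum_eigenvalue_mul b u heig _).trans ?_
    rw [sum_filter]
    refine sum_congr rfl fun k _ => ?_
    rw [hb, starProjection_span_image_apply hφ]
    by_cases hk : (k : ℕ) < N <;> simp [hk, hφ.1 k]
  · intro W hW
    refine (sum_filter_le_le_sum_mul_of_antitone hdec hpos (fun _ => sq_nonneg _) (fun k => ?_)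
      ?_).trans (sum_norm_sq_sub_starProjection_eq_sum_eigenvalue_mul b u heig W).ge
    · simpa [← Submodule.starProjection_orthogonal_val] using Wᗮ.norm_starProjection_apply_le (b k)
    · simp only [← Submodule.starProjection_orthogonal_val]
      rw [sum_norm_sq_starProjection_eq_finrank Wᗮ b]
      have hdim := W.finrank_add_finrank_orthogonal
      exact_mod_cast (by omega : n - N ≤ Module.finrank ℝ Wᗮ)

/-- POD subspace optimality: let `φ` be an orthonormal eigenbasis of the correlation
operator `C = ∑ i, u i ⊗ u i` with decreasing nonnegative eigenvalues `lam`, and let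
`N ≤ n = dim H`. Then the span `V_N` of the first `N` eigenvectors realizes the
projection error `∑ k > N, lam k`, and no subspace of dimension at most `N` does
better. -/
theorem pod_subspace_optimality {H : Type*} [NormedAddCommGroup H]
    [InnerProductSpace ℝ H] [FiniteDimensional ℝ H]
    (n : ℕ) (hn : Module.finrank ℝ H = n) (m : ℕ) (u : Fin m → H)
    (φ : Fin n → H) (lam : Fin n → ℝ)
    (hφ : Orthonormal ℝ φ) (hdec : Antitone lam) (hpos : ∀ k, 0 ≤ lam k)
    (heig : ∀ k, ∑ i, (inner ℝ (u i) (φ k) : ℝ) • u i = lam k • φ k)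
    (N : ℕ) (hN : N ≤ n) :
    (∑ i, ‖u i - (Submodule.orthogonalProjection
        (Submodule.span ℝ (φ '' {k | (k : ℕ) < N})) (u i) : H)‖ ^ 2 =
      ∑ k ∈ Finset.univ.filter (fun k : Fin n => N ≤ (k : ℕ)), lam k) ∧
    (∀ W : Submodule ℝ H, Module.finrank ℝ W ≤ N →
      ∑ k ∈ Finset.univ.filter (fun k : Fin n => N ≤ (k : ℕ)), lam k ≤
        ∑ i, ‖u i - (Submodule.orthogonalProjection W (u i) : H)‖ ^ 2) :=
  pod_subspace_optimality_general n hn m u φ lam hφ hdec hpos heig N
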